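/- arXiv:2404.07037 — 4 statements merged into one kernel-verified Lean document; each statement's English description precedes it below -/
import Mathlib

section
/- Let (U, cl) be a closure space, A ⊆ U, and c ∈ U \ A. Then A is a D-generator of c if and only if c ∈ cl(A) and for every a ∈ A, c ∉ cl(cl^b(A) \ {a}). -/
/-- `cl^b(A) = ⋃_{a ∈ A} cl({a})`. -/
def clb {U : Type*} (cl : Set U → Set U) (A : Set U) : Set U := ⋃ a ∈ A, cl {a}

/-- `A` is a minimal generator of `c`: `c ∉ A`, `c ∈ cl(A)` and no proper
subset of `A` generates `c`. -/
def MinGen {U : Type*} (cl : Set U → Set U) (c : U) (A : Set U) : Prop :=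
  c ∉ A ∧ c ∈ cl A ∧ ∀ A' ⊂ A, c ∉ cl A'

/-- `A` is a `D`-generator of `c`. -/
def DGen {U : Type*} (cl : Set U → Set U) (c : U) (A : Set U) : Prop :=
  MinGen cl c A ∧ c ∉ clb cl A ∧
    ∀ A', MinGen cl c A' → A' ⊆ clb cl A → A' = A

/-!
A generator of `c` inside `cl^b(A)` that misses some `a ∈ A` already lies in `cl^b(A) \ {a}`.
Hence the right-hand condition forces every generator of `c` inside `cl^b(A)` to contain `A`,
which yields minimality of `A` and uniqueness among minimal generators. Conversely, if
`c ∈ cl(cl^b(A) \ {a})`, then (as `U` is finite) this set contains a minimal generator of `c`;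
uniqueness identifies it with `A`, which contradicts `a ∉ cl^b(A) \ {a}`.
-/

section ClosureGenerators

variable {U : Type*} (cl : Set U → Set U) {A A' : Set U} {c : U}

theorem subset_clb (hext : ∀ A : Set U, A ⊆ cl A) (A : Set U) : A ⊆ clb cl A :=
  fun a ha => Set.mem_biUnion ha (hext {a} rfl)

theorem exists_minGen_subset [Finite U] {S : Set U} (hcS : c ∈ cl S) (hc : c ∉ S) :
    ∃ A' ⊆ S, MinGen cl c A' := by
  obtain ⟨A', hA'S, hmin⟩ := exists_minimal_le_of_wellFoundedLT (fun B => c ∈ cl B) S hcS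
  exact ⟨A', hA'S, fun h => hc (hA'S h), hmin.prop, fun B hB => hmin.not_prop_of_ssubset hB⟩

theorem exists_mem_cl_clb_diff_of_not_subset
    (hmono : ∀ A B : Set U, A ⊆ B → cl A ⊆ cl B)
    (hA' : A' ⊆ clb cl A) (hcA' : c ∈ cl A') (hAA' : ¬ A ⊆ A') :
    ∃ a ∈ A, c ∈ cl (clb cl A \ {a}) := by
  obtain ⟨a, haA, haA'⟩ := Set.not_subset.mp hAA'
  have hA'sub : A' ⊆ clb cl A \ {a} := fun x hx => ⟨hA' hx, fun hxa => haA' (hxa ▸ hx)⟩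
  exact ⟨a, haA, hmono A' _ hA'sub hcA'⟩

theorem DGen.notMem_cl_clb_diff [Finite U] (hA : DGen cl c A) {a : U} (ha : a ∈ A) :
    c ∉ cl (clb cl A \ {a}) := by
  intro hcS
  obtain ⟨A', hA'S, hA'⟩ := exists_minGen_subset cl hcS fun h => hA.2.1 h.1
  have hA'A : A' = A := hA.2.2 A' hA' fun x hx => (hA'S hx).1
  exact (hA'S (hA'A ▸ ha)).2 rfl

theorem dGen_of_forall_notMem_cl_clb_diff
    (hext : ∀ A : Set U, A ⊆ cl A) (hmono : ∀ A B : Set U, A ⊆ B → cl A ⊆ cl B)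
    (hc : c ∉ A) (hcA : c ∈ cl A) (h : ∀ a ∈ A, c ∉ cl (clb cl A \ {a})) :
    DGen cl c A := by
  have hgen_supset : ∀ {A'}, A' ⊆ clb cl A → c ∈ cl A' → A ⊆ A' := fun hA' hcA' => by
    by_contra hAA'
    obtain ⟨a, ha, hca⟩ := exists_mem_cl_clb_diff_of_not_subset cl hmono hA' hcA' hAA'
    exact h a ha hca
  have hminGen : MinGen cl c A :=
    ⟨hc, hcA, fun A' hA' hcA' =>
      hA'.not_subset (hgen_supset (hA'.subset.trans (subset_clb cl hext A)) hcA')⟩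
  have hclb : c ∉ clb cl A := by
    intro hcb
    obtain ⟨a, ha, -⟩ := Set.mem_iUnion₂.mp hcb
    refine h a ha (hext _ ⟨hcb, ?_⟩)
    rintro rfl
    exact hc ha
  refine ⟨hminGen, hclb, fun A' hA' hA'sub => ?_⟩
  have hAA' : A ⊆ A' := hgen_supset hA'sub hA'.2.1
  by_contra hne
  exact hA'.2.2 A (hAA'.ssubset_of_ne fun h => hne h.symm) hcA

end ClosureGenerators

theorem stmt3_general {U : Type*} [Fintype U] (cl : Set U → Set U)
    (hext : ∀ A : Set U, A ⊆ cl A)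
    (hmono : ∀ A B : Set U, A ⊆ B → cl A ⊆ cl B)
    (A : Set U) (c : U) (hc : c ∉ A) :
    DGen cl c A ↔ (c ∈ cl A ∧ ∀ a ∈ A, c ∉ cl (clb cl A \ {a})) :=
  ⟨fun hA => ⟨hA.1.2.1, fun _ => hA.notMem_cl_clb_diff cl⟩,
    fun ⟨hcA, h⟩ => dGen_of_forall_notMem_cl_clb_diff cl hext hmono hc hcA h⟩

/-- `A` is a `D`-generator of `c` iff `c ∈ cl(A)` and for every
`a ∈ A`, `c ∉ cl(cl^b(A) \ {a})`. -/
theorem stmt3 {U : Type*} [Fintype U] (cl : Set U → Set U)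
    (hext : ∀ A : Set U, A ⊆ cl A)
    (hmono : ∀ A B : Set U, A ⊆ B → cl A ⊆ cl B)
    (hidem : ∀ A : Set U, cl (cl A) = cl A)
    (A : Set U) (c : U) (hc : c ∉ A) :
    DGen cl c A ↔ (c ∈ cl A ∧ ∀ a ∈ A, c ∉ cl (clb cl A \ {a})) :=
  stmt3_general cl hext hmono A c hc
end

section
/- Let (U, cs) be a distributive standard closure system, Bp an antichain of (cs, ⊆), and construct (U', cs') with U' = U ∪ {d} and cs' = {F ∈ cs : F ⊆ B for some B ∈ Bp} ∪ {F ∪ {d} : F ∈ cs}. Then (U', cs') is a convex geometry: for every closed set F' ∈ cs' with F' ≠ U', there exists a ∈ U' \ F' such that F' ∪ {a} ∈ cs'. -/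
/-- The closure operator of a closure system `cs`. -/
def clOf {U : Type*} (cs : Set (Set U)) (A : Set U) : Set U :=
  ⋂₀ {F | F ∈ cs ∧ A ⊆ F}

/-- A closure system is standard if `cl({a}) \ {a}` is closed for every `a`. -/
def IsStandard {U : Type*} (cs : Set (Set U)) : Prop :=
  ∀ a : U, clOf cs {a} \ {a} ∈ cs

lemma sInter_mem {U : Type*} [Fintype U] (cs : Set (Set U))
    (huniv : Set.univ ∈ cs)
    (hinter : ∀ F₁ ∈ cs, ∀ F₂ ∈ cs, F₁ ∩ F₂ ∈ cs)
    (S : Set (Set U)) (hS : S ⊆ cs) : ⋂₀ S ∈ cs := by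
  have hfin : S.Finite := Set.toFinite S
  have key : ∀ T : Set (Set U), T.Finite → T ⊆ cs → Set.univ ∩ ⋂₀ T ∈ cs := by
    intro T hT
    refine Set.Finite.induction_on (motive := fun T _ => T ⊆ cs → Set.univ ∩ ⋂₀ T ∈ cs) T hT
      (fun _ => by simpa using huniv) ?_
    intro a s ha hfins ih hsub
    have h1 : s ⊆ cs := fun x hx => hsub (Set.mem_insert_of_mem _ hx)
    have h2 := ih h1
    have ha' : a ∈ cs := hsub (Set.mem_insert _ _)
    have heq : Set.univ ∩ ⋂₀ insert a s = a ∩ (Set.univ ∩ ⋂₀ s) := by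
      rw [Set.sInter_insert, Set.inter_left_comm]
    rw [heq]
    exact hinter a ha' _ h2
  have := key S hfin hS
  simpa using this

lemma convex_step {U : Type*} [Fintype U] (cs : Set (Set U))
    (huniv : Set.univ ∈ cs)
    (hinter : ∀ F₁ ∈ cs, ∀ F₂ ∈ cs, F₁ ∩ F₂ ∈ cs)
    (hdistrib : ∀ F₁ ∈ cs, ∀ F₂ ∈ cs, F₁ ∪ F₂ ∈ cs)
    (hstd : IsStandard cs)
    (F : Set U) (hF : F ∈ cs) (hFne : F ≠ Set.univ) :
    ∃ a ∉ F, insert a F ∈ cs := by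
  have hclmem : ∀ x : U, clOf cs {x} ∈ cs := fun x =>
    sInter_mem cs huniv hinter _ (fun t ht => ht.1)
  have hmemcl : ∀ x : U, x ∈ clOf cs {x} := fun x =>
    Set.mem_sInter.mpr (fun t ht => ht.2 rfl)
  have hcompl : Fᶜ.Nonempty := Set.nonempty_compl.mpr hFne
  obtain ⟨a, ha, hmin⟩ := Set.exists_min_image Fᶜ (fun x => (clOf cs {x}).ncard)
    (Set.toFinite _) hcompl
  refine ⟨a, ha, ?_⟩
  have hsub : clOf cs {a} \ {a} ⊆ F := by
    by_contra h
    obtain ⟨b, hb, hbF⟩ := Set.not_subset.mp h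
    have hb' : clOf cs {b} ⊆ clOf cs {a} \ {a} :=
      Set.sInter_subset_of_mem ⟨hstd a, Set.singleton_subset_iff.mpr hb⟩
    have hss : clOf cs {b} ⊂ clOf cs {a} := by
      constructor
      · exact hb'.trans Set.diff_subset
      · intro hcon
        have := hb' (hcon (hmemcl a))
        exact this.2 rfl
    have := Set.ncard_lt_ncard hss (Set.toFinite _)
    have := hmin b hbF
    omega
  have heq : insert a F = F ∪ clOf cs {a} := by
    apply Set.Subset.antisymm
    · intro x hx
      rcases hx with rfl | hx
      · exact Or.inr (hmemcl x)
      · exact Or.inl hx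
    · intro x hx
      rcases hx with hx | hx
      · exact Set.mem_insert_of_mem _ hx
      · by_cases hxa : x = a
        · exact hxa ▸ Set.mem_insert _ _
        · exact Set.mem_insert_of_mem _ (hsub ⟨hx, hxa⟩)
  rw [heq]
  exact hdistrib F hF _ (hclmem a)

/-- if `(U, cs)` is a distributive standard closure system and
`Bp` an antichain of `cs`, then the closure system `cs'` on `U' = U ∪ {d}`
(with `d` modelled by `none : Option U`) is a convex geometry. -/
theorem stmt6 {U : Type*} [Fintype U] (cs : Set (Set U))
    (huniv : Set.univ ∈ cs)
    (hinter : ∀ F₁ ∈ cs, ∀ F₂ ∈ cs, F₁ ∩ F₂ ∈ cs)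
    (hdistrib : ∀ F₁ ∈ cs, ∀ F₂ ∈ cs, F₁ ∪ F₂ ∈ cs)
    (hstd : IsStandard cs)
    (Bp : Set (Set U)) (hBp : Bp ⊆ cs)
    (hanti : ∀ B₁ ∈ Bp, ∀ B₂ ∈ Bp, B₁ ⊆ B₂ → B₁ = B₂)
    (cs' : Set (Set (Option U)))
    (hcs' : cs' =
      {G | ∃ F ∈ cs, (∃ B ∈ Bp, F ⊆ B) ∧ G = Option.some '' F} ∪
      {G | ∃ F ∈ cs, G = insert none (Option.some '' F)}) :
    ∀ F' ∈ cs', F' ≠ Set.univ → ∃ a ∉ F', insert a F' ∈ cs' := by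
  subst hcs'
  intro F' hF' hne
  rcases hF' with ⟨F, hF, hB, rfl⟩ | ⟨F, hF, rfl⟩
  · exact ⟨none, by simp, Or.inr ⟨F, hF, rfl⟩⟩
  · have hFne : F ≠ Set.univ := by
      rintro rfl
      apply hne
      ext x
      cases x <;> simp
    obtain ⟨a, haF, hins⟩ := convex_step cs huniv hinter hdistrib hstd F hF hFne
    refine ⟨some a, by simp [haF], Or.inr ⟨insert a F, hins, ?_⟩⟩
    rw [Set.image_insert_eq, Set.insert_comm]
end

section
/- Let (U, cs) be a convex geometry with closure operator cl. Then every closed set F ∈ cs has a unique minimal spanning set, namely the set of extreme elements of F. -/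
/-- `K` is a minimal spanning set of the closed set `F`:
`cl(K) = F` and `cl(K') ⊂ F` for every proper subset `K'` of `K`. -/
def IsMSS {U : Type*} (cs : Set (Set U)) (F K : Set U) : Prop :=
  clOf cs K = F ∧ ∀ K' ⊂ K, clOf cs K' ⊂ F

section aux
variable {U : Type*} {cs : Set (Set U)}

lemma subset_clOf (cs : Set (Set U)) (A : Set U) : A ⊆ clOf cs A :=
  fun _ hx => Set.mem_sInter.2 fun _ hF => hF.2 hx

lemma clOf_subset {A F : Set U} (hF : F ∈ cs) (h : A ⊆ F) : clOf cs A ⊆ F :=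
  Set.sInter_subset_of_mem ⟨hF, h⟩

lemma clOf_mono {A B : Set U} (h : A ⊆ B) : clOf cs A ⊆ clOf cs B :=
  Set.sInter_subset_sInter fun _ hF => ⟨hF.1, h.trans hF.2⟩

lemma clOf_closed [Finite U] (huniv : Set.univ ∈ cs)
    (hinter : ∀ F₁ ∈ cs, ∀ F₂ ∈ cs, F₁ ∩ F₂ ∈ cs) (A : Set U) :
    clOf cs A ∈ cs := by
  classical
  have key : ∀ T : Finset (Set U), ↑T ⊆ cs → ⋂₀ (T : Set (Set U)) ∈ cs := by
    intro T
    induction T using Finset.induction_on with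
    | empty => intro _; simpa using huniv
    | insert _ _ _ ih =>
      intro h
      rw [Finset.coe_insert, Set.sInter_insert]
      exact hinter _ (h (Finset.mem_coe.2 (Finset.mem_insert_self _ _))) _
        (ih fun x hx => h (Finset.mem_coe.2 (Finset.mem_insert_of_mem (Finset.mem_coe.1 hx))))
  have hfin := Set.toFinite {F | F ∈ cs ∧ A ⊆ F}
  have : clOf cs A = ⋂₀ (hfin.toFinset : Set (Set U)) := by
    rw [Set.Finite.coe_toFinset]; rfl
  rw [this]
  exact key _ (by rw [Set.Finite.coe_toFinset]; exact fun F hF => hF.1)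

lemma clOf_of_closed {F : Set U} (hF : F ∈ cs) : clOf cs F = F :=
  Set.Subset.antisymm (clOf_subset hF subset_rfl) (subset_clOf cs F)

/-- Relative augmentation. -/
lemma rel_aug [Finite U] (huniv : Set.univ ∈ cs)
    (hinter : ∀ F₁ ∈ cs, ∀ F₂ ∈ cs, F₁ ∩ F₂ ∈ cs)
    (hcg : ∀ F ∈ cs, F ≠ Set.univ → ∃ a ∉ F, insert a F ∈ cs)
    {G F : Set U} (hG : G ∈ cs) (hF : F ∈ cs) (hGF : G ⊂ F) :
    ∃ a ∈ F \ G, insert a G ∈ cs := by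
  obtain ⟨M, ⟨hMcs, hMF⟩, hmax⟩ := Set.Finite.exists_maximalFor id
    {M | M ∈ cs ∧ M ∩ F = G} (Set.toFinite _)
    ⟨G, hG, Set.inter_eq_left.2 hGF.subset⟩
  simp only [id_eq] at hmax
  have hMne : M ≠ Set.univ := by
    rintro rfl
    rw [Set.univ_inter] at hMF
    exact hGF.ne hMF.symm
  obtain ⟨a, haM, haMcs⟩ := hcg M hMcs hMne
  have haF : a ∈ F := by
    by_contra haF
    have : (insert a M) ∩ F = G := by
      rw [Set.insert_inter_of_notMem haF, hMF]
    have heq := @hmax (insert a M) ⟨haMcs, this⟩ (Set.subset_insert _ _)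
    exact haM (heq (Set.mem_insert a M))
  refine ⟨a, ⟨haF, fun haG => haM (by rw [← hMF] at haG; exact haG.1)⟩, ?_⟩
  have : insert a G = (insert a M) ∩ F := by
    rw [Set.insert_inter_of_mem haF, hMF]
  rw [this]
  exact hinter _ haMcs _ hF

end aux

/-- in a convex geometry, every closed set `F` has a unique
minimal spanning set, namely the set of extreme elements of `F`. -/
theorem stmt7 {U : Type*} [Fintype U] (cs : Set (Set U))
    (huniv : Set.univ ∈ cs)
    (hinter : ∀ F₁ ∈ cs, ∀ F₂ ∈ cs, F₁ ∩ F₂ ∈ cs)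
    (hcg : ∀ F ∈ cs, F ≠ Set.univ → ∃ a ∉ F, insert a F ∈ cs) :
    ∀ F ∈ cs,
      IsMSS cs F {a ∈ F | a ∉ clOf cs (F \ {a})} ∧
      ∀ K, IsMSS cs F K → K = {a ∈ F | a ∉ clOf cs (F \ {a})} := by
  intro F hF
  set Ex := {a ∈ F | a ∉ clOf cs (F \ {a})} with hEx
  -- every extreme point belongs to any spanning set
  have hext_mem : ∀ K, clOf cs K = F → Ex ⊆ K := by
    intro K hK a ha
    by_contra haK
    have hKsub : K ⊆ F \ {a} := fun x hx =>
      ⟨hK ▸ subset_clOf cs K hx, fun hxa => haK (hxa ▸ hx)⟩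
    have haK' : a ∈ clOf cs K := by rw [hK]; exact ha.1
    exact ha.2 (clOf_mono hKsub haK')
  -- extreme points span F
  have hspan : clOf cs Ex = F := by
    have hExF : Ex ⊆ F := fun a ha => ha.1
    have hEF : clOf cs Ex ⊆ F := clOf_subset hF hExF
    by_contra hne
    have hEFs : clOf cs Ex ⊂ F := ⟨hEF, fun h => hne (Set.Subset.antisymm hEF h)⟩
    set E := clOf cs Ex with hE
    have hEcs : E ∈ cs := clOf_closed huniv hinter Ex
    obtain ⟨M, ⟨hMcs, hEM, hMF, hMneF⟩, hmax⟩ := Set.Finite.exists_maximalFor id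
      {M | M ∈ cs ∧ E ⊆ M ∧ M ⊆ F ∧ M ≠ F} (Set.toFinite _)
      ⟨E, hEcs, subset_rfl, hEFs.subset, hEFs.ne⟩
    simp only [id_eq] at hmax
    obtain ⟨a, haFM, hins⟩ := rel_aug huniv hinter hcg hMcs hF (hMF.ssubset_of_ne hMneF)
    have hinsF : insert a M = F := by
      by_contra hne'
      have heq := @hmax (insert a M) ⟨hins, hEM.trans (Set.subset_insert _ _),
        Set.insert_subset haFM.1 hMF, hne'⟩ (Set.subset_insert _ _)
      exact haFM.2 (heq (Set.mem_insert a M))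
    have hMeq : M = F \ {a} := by
      ext x
      constructor
      · intro hx
        exact ⟨hMF hx, fun hxa => haFM.2 ((Set.mem_singleton_iff.1 hxa) ▸ hx)⟩
      · rintro ⟨hxF, hxa⟩
        rcases (hinsF ▸ hxF : x ∈ insert a M) with h | h
        · exact absurd h hxa
        · exact h
    have haEx : a ∈ Ex := by
      refine ⟨haFM.1, ?_⟩
      rw [← hMeq, clOf_of_closed hMcs]
      exact haFM.2
    exact haFM.2 (hEM (subset_clOf cs Ex haEx))
  have hmss : IsMSS cs F Ex := by
    refine ⟨hspan, fun K' hK' => ?_⟩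
    have hsub : clOf cs K' ⊆ F := clOf_subset hF (hK'.subset.trans fun a ha => ha.1)
    refine ⟨hsub, fun h => ?_⟩
    have heq : clOf cs K' = F := Set.Subset.antisymm hsub h
    exact hK'.not_subset (hext_mem K' heq)
  refine ⟨hmss, fun K hK => ?_⟩
  have hExK : Ex ⊆ K := hext_mem K hK.1
  by_contra hne
  have : Ex ⊂ K := ⟨hExK, fun h => hne (Set.Subset.antisymm h hExK)⟩
  exact (hK.2 Ex this).ne hspan
end

section
/- Let φ = {C_1, …, C_m} be a positive 3-CNF over variables V, let U = V ∪ {c_1, …, c_{m+1}} with new elements c_i, and let I consist of the implications {c_i, v} → c_{i+1} for each 1 ≤ i ≤ m and v ∈ C_i, together with {v, w} → c_{m+1} for each pair of variables v, w appearing together in some clause. For any A ⊆ U whose variable part A \ {c_1, …, c_{m+1}} contains no two variables appearing together in a clause, and any 1 < i ≤ m+1: c_i ∈ cl(A) if and only if c_i ∈ A, or both c_{i−1} ∈ cl(A) and C_{i−1} ∩ A ≠ ∅. -/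
/-- `F` is closed for the implicational base `I`. -/
def ImpClosed {U : Type*} (I : Set (Set U × U)) (F : Set U) : Prop :=
  ∀ p ∈ I, p.1 ⊆ F → p.2 ∈ F

/-- The closure operator induced by an implicational base `I`. -/
def clI {U : Type*} (I : Set (Set U × U)) (A : Set U) : Set U :=
  ⋂₀ {F | ImpClosed I F ∧ A ⊆ F}

/-- Two (distinct) variables are in conflict if some clause contains both. -/
def Conflict {V : Type*} {m : ℕ} (C : Fin m → Finset V) (v w : V) : Prop :=
  v ≠ w ∧ ∃ j, v ∈ C j ∧ w ∈ C j

/-!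
A rule `{c_i, v} → c_{i+1}` or `{v, w} → c_{m+1}` only ever derives a gadget element, so the
variables of `cl(A)` are those of `A`. Hence, if `c_{i+1} ∉ A` lies in `cl(A)`, the rule that
derives it has premises in `cl(A)`: a conflict rule is excluded because `A` is conflict-free,
so it is `{c_i, v} → c_{i+1}` with `c_i ∈ cl(A)` and `v ∈ C_i ∩ A`.
-/

section ClosureOperator

variable {U : Type*} {I : Set (Set U × U)} {A : Set U}

lemma subset_clI : A ⊆ clI I A :=
  fun _ hx _ hF => hF.2 hx

lemma impClosed_clI : ImpClosed I (clI I A) :=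
  fun p hp hsub _ hF => hF.1 p hp fun _ hx => hsub hx _ hF

lemma clI_subset {F : Set U} (hF : ImpClosed I F) (hAF : A ⊆ F) : clI I A ⊆ F :=
  fun _ hx => hx F ⟨hF, hAF⟩

lemma clI_subset_union_of_forall_snd_mem {S : Set U} (hS : ∀ p ∈ I, p.2 ∈ S) :
    clI I A ⊆ A ∪ S :=
  clI_subset (fun p hp _ => Or.inr (hS p hp)) Set.subset_union_left

lemma exists_mem_of_mem_clI_of_notMem {x : U} (hx : x ∈ clI I A) (hxA : x ∉ A) :
    ∃ p ∈ I, p.1 ⊆ clI I A ∧ p.2 = x := by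
  by_contra! hnone
  have hclosed : ImpClosed I (clI I A \ {x}) := fun p hp hsub =>
    ⟨impClosed_clI p hp (hsub.trans Set.sdiff_subset),
      hnone p hp (hsub.trans Set.sdiff_subset)⟩
  have hA : A ⊆ clI I A \ {x} := fun y hy =>
    ⟨subset_clI hy, fun hyx => hxA (hyx ▸ hy)⟩
  exact (clI_subset hclosed hA hx).2 rfl

end ClosureOperator

section Reduction

variable {V : Type*} {m : ℕ}

/-- The gadget element `c_{k+1}` is `Sum.inr k`. -/
def cnfImpBase (C : Fin m → Finset V) : Set (Set (V ⊕ Fin (m + 1)) × (V ⊕ Fin (m + 1))) :=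
  {p | ∃ (i : Fin m) (v : V), v ∈ C i ∧
      p = ({Sum.inr i.castSucc, Sum.inl v}, Sum.inr i.succ)} ∪
    {p | ∃ v w : V, Conflict C v w ∧
      p = ({Sum.inl v, Sum.inl w}, Sum.inr (Fin.last m))}

lemma inl_mem_clI_cnfImpBase_iff {C : Fin m → Finset V} {A : Set (V ⊕ Fin (m + 1))} {v : V} :
    Sum.inl v ∈ clI (cnfImpBase C) A ↔ Sum.inl v ∈ A := by
  refine ⟨fun hv => ?_, fun hv => subset_clI hv⟩
  have hsnd : ∀ p ∈ cnfImpBase C, p.2 ∈ Set.range Sum.inr := by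
    rintro p (⟨j, -, -, rfl⟩ | ⟨-, -, -, rfl⟩)
    exacts [⟨j.succ, rfl⟩, ⟨Fin.last m, rfl⟩]
  obtain hvA | ⟨_, hk⟩ := clI_subset_union_of_forall_snd_mem hsnd hv
  · exact hvA
  · exact absurd hk Sum.inr_ne_inl

end Reduction

theorem stmt11_general {V : Type*} (m : ℕ)
    (C : Fin m → Finset V)
    (I : Set (Set (V ⊕ Fin (m + 1)) × (V ⊕ Fin (m + 1))))
    (hI : I =
      {p | ∃ (i : Fin m) (v : V), v ∈ C i ∧
        p = ({Sum.inr i.castSucc, Sum.inl v}, Sum.inr i.succ)} ∪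
      {p | ∃ v w : V, Conflict C v w ∧
        p = ({Sum.inl v, Sum.inl w}, Sum.inr (Fin.last m))})
    (A : Set (V ⊕ Fin (m + 1)))
    (hA : ¬ ∃ v w : V, Conflict C v w ∧ Sum.inl v ∈ A ∧ Sum.inl w ∈ A)
    (i : Fin m) :
    Sum.inr i.succ ∈ clI I A ↔
      (Sum.inr i.succ ∈ A ∨
        (Sum.inr i.castSucc ∈ clI I A ∧ ∃ v ∈ C i, Sum.inl v ∈ A)) := by
  change I = cnfImpBase C at hI
  subst hI
  refine ⟨fun hmem => or_iff_not_imp_left.2 fun hnA => ?_, ?_⟩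
  · obtain ⟨p, hp, hsub, hpi⟩ := exists_mem_of_mem_clI_of_notMem hmem hnA
    rcases hp with ⟨j, v, hv, rfl⟩ | ⟨v, w, hvw, rfl⟩
    · obtain rfl : j = i := Fin.succ_injective _ (Sum.inr_injective hpi)
      exact ⟨hsub (Or.inl rfl), v, hv, inl_mem_clI_cnfImpBase_iff.1 (hsub (Or.inr rfl))⟩
    · exact (hA ⟨v, w, hvw, inl_mem_clI_cnfImpBase_iff.1 (hsub (Or.inl rfl)),
        inl_mem_clI_cnfImpBase_iff.1 (hsub (Or.inr rfl))⟩).elim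
  · rintro (h | ⟨hprev, v, hv, hvA⟩)
    · exact subset_clI h
    · refine impClosed_clI (I := cnfImpBase C) _ (Or.inl ⟨i, v, hv, rfl⟩) ?_
      rintro y (rfl | rfl)
      exacts [hprev, subset_clI hvA]

/-- Proposition about the first reduction: in the closure
system built from the positive 3-CNF `φ = (C_j)_{j : Fin m}` on
`U = V ∪ {c_1, …, c_{m+1}}` (gadget `c_{k+1}` is `Sum.inr k`), for any `A`
whose variable part is conflict-free and any clause index `i` (so that
`Sum.inr i.succ` is `c_{i+2}`, covering all indices `1 < i ≤ m+1`):
`c_{i+1} ∈ cl(A)` iff `c_{i+1} ∈ A`, or `c_i ∈ cl(A)` and `C_i ∩ A ≠ ∅`. -/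
theorem stmt11 {V : Type*} [Fintype V] (m : ℕ)
    (C : Fin m → Finset V) (hC : ∀ j, (C j).card = 3)
    (I : Set (Set (V ⊕ Fin (m + 1)) × (V ⊕ Fin (m + 1))))
    (hI : I =
      {p | ∃ (i : Fin m) (v : V), v ∈ C i ∧
        p = ({Sum.inr i.castSucc, Sum.inl v}, Sum.inr i.succ)} ∪
      {p | ∃ v w : V, Conflict C v w ∧
        p = ({Sum.inl v, Sum.inl w}, Sum.inr (Fin.last m))})
    (A : Set (V ⊕ Fin (m + 1)))
    (hA : ¬ ∃ v w : V, Conflict C v w ∧ Sum.inl v ∈ A ∧ Sum.inl w ∈ A)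
    (i : Fin m) :
    Sum.inr i.succ ∈ clI I A ↔
      (Sum.inr i.succ ∈ A ∨
        (Sum.inr i.castSucc ∈ clI I A ∧ ∃ v ∈ C i, Sum.inl v ∈ A)) :=
  stmt11_general m C I hI A hA i
end
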